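/- arXiv:2510.17096 — 2 statements merged into one kernel-verified Lean document; each statement's English description precedes it below -/
import Mathlib

section
/- Let ψ : ℕ → (0,∞) be a monotonically non-increasing function with Σ_{q=1}^∞ ψ(q) < ∞. Then there exists an integer M, depending on ψ, such that for every m ≥ M: (i) for any two distinct primitive pairs (p_1,q_1), (p_2,q_2) ∈ P(ℤ²) with 2^m ≤ q_1, q_2 < 2^{m+1}, the closed balls \overline{B(p_1/q_1, ψ(2^m)/q_1)} and \overline{B(p_2/q_2, ψ(2^m)/q_2)} are disjoint; and (ii) for any two distinct primitive pairs (p_1,q_1), (p_2,q_2) ∈ P(ℤ²) with 2^{m−1} ≤ q_1, q_2 < 2^m, the closed balls \overline{B(p_1/q_1, ψ(2^m)/q_1)} and \overline{B(p_2/q_2, ψ(2^m)/q_2)} are disjoint. -/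
open MeasureTheory Set

/-- An iterated function system on ℝ: finitely many affine contractions
`x ↦ c i * x + b i` with contraction ratios `c i ∈ (0,1)`. -/
structure IFS where
  n : ℕ
  npos : 0 < n
  c : Fin n → ℝ
  b : Fin n → ℝ
  c_pos : ∀ i, 0 < c i
  c_lt_one : ∀ i, c i < 1

namespace IFS

/-- The `i`-th map of the IFS. -/
noncomputable def map (F : IFS) (i : Fin F.n) : ℝ → ℝ := fun x => F.c i * x + F.b i

/-- `F` satisfies the open set condition witnessed by the open set `U`. -/
def OSCWith (F : IFS) (U : Set ℝ) : Prop :=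
  U.Nonempty ∧ IsOpen U ∧ Bornology.IsBounded U ∧
    (⋃ i, F.map i '' U) ⊆ U ∧
    Pairwise fun i j => Disjoint (F.map i '' U) (F.map j '' U)

/-- The open set condition. -/
def OSC (F : IFS) : Prop := ∃ U, F.OSCWith U

/-- `K` is the attractor (self-similar set) of `F`. -/
def IsAttractor (F : IFS) (K : Set ℝ) : Prop :=
  K.Nonempty ∧ IsCompact K ∧ K = ⋃ i, F.map i '' K

/-- Composition `f_α = f_{i₁} ∘ ⋯ ∘ f_{i_k}` of the maps along a word `α`. -/
noncomputable def wordMap (F : IFS) : List (Fin F.n) → ℝ → ℝ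
  | [] => id
  | i :: w => F.map i ∘ F.wordMap w

/-- Contraction ratio `c_α` of `f_α`. -/
noncomputable def wordC (F : IFS) (w : List (Fin F.n)) : ℝ := (w.map F.c).prod

end IFS

/-- The set `W(ψ)` of `ψ`-well approximable real numbers: those `x` with
`|q·x − p| < ψ q` for infinitely many pairs `(p, q) ∈ ℤ × ℕ`, `q ≥ 1`. -/
def wellApprox (ψ : ℕ → ℝ) : Set ℝ :=
  {x : ℝ | {pq : ℤ × ℕ | 0 < pq.2 ∧ |(pq.2 : ℝ) * x - (pq.1 : ℝ)| < ψ pq.2}.Infinite}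

/-- `ψ_v (q) = q^{-v}`. -/
noncomputable def psiv (v : ℝ) : ℕ → ℝ := fun q => (q : ℝ) ^ (-v)

/-- The set of very well approximable numbers: `VWA = ⋃_{v > 1} W(ψ_v)`. -/
noncomputable def VWA : Set ℝ := ⋃ v ∈ Set.Ioi (1 : ℝ), wellApprox (psiv v)

/-- The (topological) support of a Borel measure on ℝ. -/
def msupport (μ : Measure ℝ) : Set ℝ :=
  {x | ∀ U : Set ℝ, IsOpen U → x ∈ U → 0 < μ U}

/-- `μ` is the self-similar measure of `F` with exponent `s`: a compactly supported
Borel probability measure with `μ = ∑ i, (c i ^ s) • (F.map i)_* μ`. -/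
def selfSimilarMeasure (F : IFS) (s : ℝ) (μ : Measure ℝ) : Prop :=
  IsProbabilityMeasure μ ∧ IsCompact (msupport μ) ∧
    μ = ∑ i, ENNReal.ofReal (F.c i ^ s) • Measure.map (F.map i) μ

/-- The set `A_m(ψ)`: points within `ψ(2^m)/q` of a reduced fraction `p/q` with
`2^m ≤ q < 2^{m+1}`. -/
def Aset (ψ : ℕ → ℝ) (m : ℕ) : Set ℝ :=
  {x | ∃ p : ℤ, ∃ q : ℕ, Int.gcd p q = 1 ∧ 2 ^ m ≤ q ∧ q < 2 ^ (m + 1) ∧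
    |(q : ℝ) * x - (p : ℝ)| < ψ (2 ^ m)}

/-- The set `D_m(ψ)`: points within `ψ(2^m)/q` of a reduced fraction `p/q` with
`2^{m-1} ≤ q < 2^m`. -/
def Dset (ψ : ℕ → ℝ) (m : ℕ) : Set ℝ :=
  {x | ∃ p : ℤ, ∃ q : ℕ, Int.gcd p q = 1 ∧ 2 ^ (m - 1) ≤ q ∧ q < 2 ^ m ∧
    |(q : ℝ) * x - (p : ℝ)| < ψ (2 ^ m)}

/-- Index set of the family of balls `𝒟_m`: primitive pairs `(p,q)` with
`2^{m-1} ≤ q < 2^m`. -/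
def Didx (m : ℕ) : Set (ℤ × ℕ) :=
  {pq | Int.gcd pq.1 pq.2 = 1 ∧ 2 ^ (m - 1) ≤ pq.2 ∧ pq.2 < 2 ^ m}

/-- The ball `B(p/q, ψ(2^m)/q)` of the families `𝒟_m(ψ)` and `𝒜_m(ψ)`. -/
noncomputable def ballOf (ψ : ℕ → ℝ) (m : ℕ) (pq : ℤ × ℕ) : Set ℝ :=
  Metric.ball ((pq.1 : ℝ) / (pq.2 : ℝ)) (ψ (2 ^ m) / (pq.2 : ℝ))

lemma ball_disj (c : ℝ) (hc : 0 < c) (p₁ p₂ : ℤ) (q₁ q₂ : ℕ)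
    (h1 : Int.gcd p₁ q₁ = 1) (h2 : Int.gcd p₂ q₂ = 1)
    (hq1 : 0 < q₁) (hq2 : 0 < q₂)
    (hne : (p₁, q₁) ≠ (p₂, q₂))
    (hc' : c * ((q₁ : ℝ) + q₂) < 1) :
    Disjoint (closure (Metric.ball ((p₁ : ℝ) / (q₁ : ℝ)) (c / (q₁ : ℝ))))
      (closure (Metric.ball ((p₂ : ℝ) / (q₂ : ℝ)) (c / (q₂ : ℝ)))) := by
  have hq1' : (0 : ℝ) < q₁ := by exact_mod_cast hq1
  have hq2' : (0 : ℝ) < q₂ := by exact_mod_cast hq2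
  rw [closure_ball _ (ne_of_gt (div_pos hc hq1')),
    closure_ball _ (ne_of_gt (div_pos hc hq2'))]
  apply Metric.closedBall_disjoint_closedBall
  have hkey : p₁ * q₂ ≠ p₂ * q₁ := by
    intro h
    apply hne
    have hco1 : IsCoprime (p₁ : ℤ) (q₁ : ℤ) := Int.isCoprime_iff_gcd_eq_one.mpr h1
    have hco2 : IsCoprime (p₂ : ℤ) (q₂ : ℤ) := Int.isCoprime_iff_gcd_eq_one.mpr h2
    have hd1 : (q₁ : ℤ) ∣ q₂ :=
      hco1.symm.dvd_of_dvd_mul_left ⟨p₂, by linarith⟩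
    have hd2 : (q₂ : ℤ) ∣ q₁ :=
      hco2.symm.dvd_of_dvd_mul_left ⟨p₁, by linarith⟩
    have hqeq : (q₁ : ℤ) = q₂ := Int.dvd_antisymm (by positivity) (by positivity) hd1 hd2
    have hq : q₁ = q₂ := by exact_mod_cast hqeq
    subst hq
    have hp : p₁ = p₂ := by
      have hq0 : (q₁ : ℤ) ≠ 0 := Int.natCast_ne_zero.mpr hq1.ne'
      exact mul_right_cancel₀ hq0 h
    simp [hp]
  have h1le : (1 : ℝ) ≤ |((p₁ * q₂ - p₂ * q₁ : ℤ) : ℝ)| := by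
    have : (1 : ℤ) ≤ |p₁ * q₂ - p₂ * q₁| := Int.one_le_abs (sub_ne_zero.mpr hkey)
    calc (1 : ℝ) ≤ ((|p₁ * q₂ - p₂ * q₁| : ℤ) : ℝ) := by exact_mod_cast this
      _ = _ := by push_cast [Int.cast_abs]; ring_nf
  have hdist : dist ((p₁ : ℝ) / q₁) ((p₂ : ℝ) / q₂)
      = |((p₁ * q₂ - p₂ * q₁ : ℤ) : ℝ)| / (q₁ * q₂) := by
    rw [Real.dist_eq, div_sub_div _ _ hq1'.ne' hq2'.ne', abs_div,
      abs_of_pos (mul_pos hq1' hq2')]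
    push_cast
    ring_nf
  rw [hdist]
  have hlt : c / q₁ + c / q₂ < 1 / ((q₁ : ℝ) * q₂) := by
    rw [div_add_div _ _ hq1'.ne' hq2'.ne', div_lt_div_iff₀ (by positivity) (by positivity)]
    nlinarith [mul_pos hq1' hq2', mul_lt_mul_of_pos_right (show c * ↑q₂ + ↑q₁ * c < 1 by linarith) (mul_pos hq1' hq2')]
  calc c / q₁ + c / q₂ < 1 / ((q₁ : ℝ) * q₂) := hlt
    _ ≤ _ := by gcongr

/-- For a summable non-increasing `ψ`, for all large `m` the closed
balls `B(p/q, ψ(2^m)/q)` attached to distinct primitive pairs with `2^m ≤ q < 2^{m+1}`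
(resp. `2^{m-1} ≤ q < 2^m`) are pairwise disjoint. -/
theorem stmt8 (ψ : ℕ → ℝ) (hpos : ∀ q, 0 < ψ q) (hmono : Antitone ψ)
    (hsum : Summable fun q : ℕ => ψ (q + 1)) :
    ∃ M : ℕ, ∀ m : ℕ, M ≤ m →
      (∀ p₁ p₂ : ℤ, ∀ q₁ q₂ : ℕ,
        Int.gcd p₁ q₁ = 1 → Int.gcd p₂ q₂ = 1 →
        2 ^ m ≤ q₁ → q₁ < 2 ^ (m + 1) → 2 ^ m ≤ q₂ → q₂ < 2 ^ (m + 1) →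
        (p₁, q₁) ≠ (p₂, q₂) →
        Disjoint (closure (Metric.ball ((p₁ : ℝ) / (q₁ : ℝ)) (ψ (2 ^ m) / (q₁ : ℝ))))
          (closure (Metric.ball ((p₂ : ℝ) / (q₂ : ℝ)) (ψ (2 ^ m) / (q₂ : ℝ))))) ∧
      (∀ p₁ p₂ : ℤ, ∀ q₁ q₂ : ℕ,
        Int.gcd p₁ q₁ = 1 → Int.gcd p₂ q₂ = 1 →
        2 ^ (m - 1) ≤ q₁ → q₁ < 2 ^ m → 2 ^ (m - 1) ≤ q₂ → q₂ < 2 ^ m →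
        (p₁, q₁) ≠ (p₂, q₂) →
        Disjoint (closure (Metric.ball ((p₁ : ℝ) / (q₁ : ℝ)) (ψ (2 ^ m) / (q₁ : ℝ))))
          (closure (Metric.ball ((p₂ : ℝ) / (q₂ : ℝ)) (ψ (2 ^ m) / (q₂ : ℝ))))) := by
  have hψ : Summable ψ := (summable_nat_add_iff 1).mp hsum
  have hcond : Summable fun k : ℕ => (2 : ℝ) ^ k * ψ (2 ^ k) :=
    (summable_condensed_iff_of_nonneg (fun n => (hpos n).le)
      (fun m n _ h => hmono h)).mpr hψ
  have htend : Filter.Tendsto (fun k : ℕ => (2 : ℝ) ^ k * ψ (2 ^ k)) Filter.atTop (nhds 0) :=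
    hcond.tendsto_atTop_zero
  have hev : ∀ᶠ k in Filter.atTop, (2 : ℝ) ^ k * ψ (2 ^ k) < 1 / 4 := by
    have := htend.eventually (gt_mem_nhds (by norm_num : (0 : ℝ) < 1 / 4))
    exact this
  obtain ⟨M, hM⟩ := Filter.eventually_atTop.mp hev
  refine ⟨M, fun m hm => ?_⟩
  have hsmall : (2 : ℝ) ^ m * ψ (2 ^ m) < 1 / 4 := hM m hm
  have hψpos := hpos (2 ^ m)
  constructor
  · intro p₁ p₂ q₁ q₂ h1 h2 hl1 hu1 hl2 hu2 hne
    refine ball_disj _ hψpos _ _ _ _ h1 h2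
      ((pow_pos (by norm_num : 0 < 2) m).trans_le hl1)
      ((pow_pos (by norm_num : 0 < 2) m).trans_le hl2) hne ?_
    have b1 : (q₁ : ℝ) < 2 * 2 ^ m := by
      have : (q₁ : ℝ) < (2 : ℝ) ^ (m + 1) := by exact_mod_cast hu1
      rw [pow_succ] at this; linarith
    have b2 : (q₂ : ℝ) < 2 * 2 ^ m := by
      have : (q₂ : ℝ) < (2 : ℝ) ^ (m + 1) := by exact_mod_cast hu2
      rw [pow_succ] at this; linarith
    have hp : (0 : ℝ) < 2 ^ m := by positivity
    nlinarith [hψpos]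
  · intro p₁ p₂ q₁ q₂ h1 h2 hl1 hu1 hl2 hu2 hne
    refine ball_disj _ hψpos _ _ _ _ h1 h2
      ((pow_pos (by norm_num : 0 < 2) (m - 1)).trans_le hl1)
      ((pow_pos (by norm_num : 0 < 2) (m - 1)).trans_le hl2) hne ?_
    have b1 : (q₁ : ℝ) < 2 ^ m := by exact_mod_cast hu1
    have b2 : (q₂ : ℝ) < 2 ^ m := by exact_mod_cast hu2
    have hp : (0 : ℝ) < 2 ^ m := by positivity
    nlinarith [hψpos]
end

section
/- Let 𝓕 be an IFS on ℝ satisfying the open set condition, with self-similar set K of Hausdorff dimension s and associated self-similar measure μ, Ahlfors regular with constants a_1, a_2 > 0. Let ψ : ℕ → (0,∞) be monotonically non-increasing with Σ_{q=1}^∞ ψ(q) < ∞, and suppose there are constants Ĉ > 0 and M_0 ∈ ℕ such that for every m ≥ M_0: the closures of distinct balls in 𝒜_m(2ψ) are pairwise disjoint, ψ(2^{M_0})/2^{M_0} ≤ diam(K), and μ(A_m(2ψ)) ≤ 3Ĉ·2^m·ψ(2^m). Then for every m ≥ M_0, the number of balls in 𝒜_m(ψ) having nonempty intersection with K is at most 3Ĉ·a_1^{−1}·2^{m(1+s)+s}·ψ(2^m)^{1−s}.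 -/
open MeasureTheory Set

/-- Counting bound: for `m ≥ M₀`, the number of balls of `𝒜_m(ψ)`
meeting `K` is at most `3 Chat a₁⁻¹ 2^{m(1+s)+s} ψ(2^m)^{1−s}`. -/
theorem stmt15 (F : IFS) (hOSC : F.OSC) (K : Set ℝ) (hK : F.IsAttractor K)
    (s : ℝ) (hs : s = (dimH K).toReal)
    (μ : Measure ℝ) (hμ : selfSimilarMeasure F s μ) (hsupp : msupport μ = K)
    (a₁ a₂ : ℝ) (ha₁ : 0 < a₁) (ha₂ : 0 < a₂)
    (hreg : ∀ x ∈ msupport μ, ∀ r : ℝ, 0 < r → r ≤ Metric.diam (msupport μ) →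
      ENNReal.ofReal (a₁ * r ^ s) ≤ μ (Metric.ball x r) ∧
        μ (Metric.ball x r) ≤ ENNReal.ofReal (a₂ * r ^ s))
    (ψ : ℕ → ℝ) (hpos : ∀ q, 0 < ψ q) (hmono : Antitone ψ)
    (hsum : Summable fun q : ℕ => ψ (q + 1))
    (Chat : ℝ) (hChat : 0 < Chat) (M₀ : ℕ)
    -- closures of distinct balls of `𝒜_m(2ψ)` are pairwise disjoint for `m ≥ M₀`
    (hdisj : ∀ m : ℕ, M₀ ≤ m → ∀ p₁ p₂ : ℤ, ∀ q₁ q₂ : ℕ,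
      Int.gcd p₁ q₁ = 1 → Int.gcd p₂ q₂ = 1 →
      2 ^ m ≤ q₁ → q₁ < 2 ^ (m + 1) → 2 ^ m ≤ q₂ → q₂ < 2 ^ (m + 1) →
      (p₁, q₁) ≠ (p₂, q₂) →
      Disjoint (closure (Metric.ball ((p₁ : ℝ) / (q₁ : ℝ)) (2 * ψ (2 ^ m) / (q₁ : ℝ))))
        (closure (Metric.ball ((p₂ : ℝ) / (q₂ : ℝ)) (2 * ψ (2 ^ m) / (q₂ : ℝ)))))
    (hdiam : ψ (2 ^ M₀) / (2 : ℝ) ^ M₀ ≤ Metric.diam K)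
    (hmeas : ∀ m : ℕ, M₀ ≤ m →
      μ (Aset (fun q => 2 * ψ q) m) ≤ ENNReal.ofReal (3 * Chat * ((2 : ℝ) ^ m * ψ (2 ^ m)))) :
    ∀ m : ℕ, M₀ ≤ m →
      {pq : ℤ × ℕ | Int.gcd pq.1 pq.2 = 1 ∧ 2 ^ m ≤ pq.2 ∧ pq.2 < 2 ^ (m + 1) ∧
        (ballOf ψ m pq ∩ K).Nonempty}.Finite ∧
      ({pq : ℤ × ℕ | Int.gcd pq.1 pq.2 = 1 ∧ 2 ^ m ≤ pq.2 ∧ pq.2 < 2 ^ (m + 1) ∧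
        (ballOf ψ m pq ∩ K).Nonempty}.ncard : ℝ) ≤
        3 * Chat * a₁⁻¹ * (2 : ℝ) ^ ((m : ℝ) * (1 + s) + s) * ψ (2 ^ m) ^ (1 - s) := by
  intro m hm
  have hψm : 0 < ψ (2 ^ m) := hpos _
  have hs0 : 0 ≤ s := by rw [hs]; exact ENNReal.toReal_nonneg
  set ψm := ψ (2 ^ m) with hψmdef
  set S : Set (ℤ × ℕ) := {pq : ℤ × ℕ | Int.gcd pq.1 pq.2 = 1 ∧ 2 ^ m ≤ pq.2 ∧
      pq.2 < 2 ^ (m + 1) ∧ (ballOf ψ m pq ∩ K).Nonempty} with hSdef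
  set l : ℝ := a₁ * (ψm / (2 : ℝ) ^ (m + 1)) ^ s with hldef
  set R0 : ℝ := 3 * Chat * ((2 : ℝ) ^ m * ψm) with hR0def
  have hl : 0 < l := by
    apply mul_pos ha₁
    exact Real.rpow_pos_of_pos (div_pos hψm (by positivity)) s
  have hR0 : 0 < R0 := by
    apply mul_pos (by linarith)
    positivity
  -- lower bound for the measure of each doubled ball
  have hlow : ∀ pq ∈ S, ENNReal.ofReal l ≤
      μ (Metric.ball ((pq.1 : ℝ) / (pq.2 : ℝ)) (2 * ψm / (pq.2 : ℝ))) := by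
    rintro ⟨p, q⟩ ⟨hg, hq1, hq2, x, hxB, hxK⟩
    have hq0 : 0 < q := lt_of_lt_of_le (pow_pos two_pos m) hq1
    have hqR : (0 : ℝ) < q := by exact_mod_cast hq0
    have hr : 0 < ψm / q := div_pos hψm hqR
    have h2Mq : ((2 : ℝ) ^ M₀) ≤ (q : ℝ) := by
      have : (2 : ℕ) ^ M₀ ≤ q :=
        le_trans (Nat.pow_le_pow_right (by norm_num) hm) hq1
      exact_mod_cast this
    have hrdiam : ψm / q ≤ Metric.diam (msupport μ) := by
      rw [hsupp]
      refine le_trans ?_ hdiam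
      apply div_le_div₀ (le_of_lt (hpos _)) ?_ (by positivity) h2Mq
      exact hmono (Nat.pow_le_pow_right (by norm_num) hm)
    have hregx := (hreg x (by rw [hsupp]; exact hxK) (ψm / q) hr hrdiam).1
    have hxd : dist x ((p : ℝ) / q) < ψm / q := by
      simpa [ballOf] using hxB
    have hsub : Metric.ball x (ψm / q) ⊆ Metric.ball ((p : ℝ) / q) (2 * ψm / q) := by
      intro y hy
      rw [Metric.mem_ball] at hy ⊢
      have ht := dist_triangle y x ((p : ℝ) / q)
      have : 2 * ψm / q = ψm / q + ψm / q := by ring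
      linarith
    have hle : l ≤ a₁ * (ψm / q) ^ s := by
      apply mul_le_mul_of_nonneg_left _ ha₁.le
      apply Real.rpow_le_rpow (by positivity) _ hs0
      apply div_le_div₀ hψm.le le_rfl hqR
      exact_mod_cast hq2.le
    calc ENNReal.ofReal l ≤ ENNReal.ofReal (a₁ * (ψm / q) ^ s) := ENNReal.ofReal_le_ofReal hle
      _ ≤ μ (Metric.ball x (ψm / q)) := hregx
      _ ≤ μ (Metric.ball ((p : ℝ) / q) (2 * ψm / q)) := measure_mono hsub
  -- key cardinality bound for finite subsets
  have key : ∀ T : Finset (ℤ × ℕ), ↑T ⊆ S → (T.card : ℝ) * l ≤ R0 := by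
    intro T hT
    have hdisj' : (↑T : Set (ℤ × ℕ)).PairwiseDisjoint
        (fun pq : ℤ × ℕ => Metric.ball ((pq.1 : ℝ) / (pq.2 : ℝ)) (2 * ψm / (pq.2 : ℝ))) := by
      intro pq hpq pq' hpq' hne
      obtain ⟨hg, hq1, hq2, -⟩ := hT hpq
      obtain ⟨hg', hq1', hq2', -⟩ := hT hpq'
      have hne' : (pq.1, pq.2) ≠ (pq'.1, pq'.2) := by simpa using hne
      exact (hdisj m hm pq.1 pq'.1 pq.2 pq'.2 hg hg' hq1 hq2 hq1' hq2' hne').mono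
        subset_closure subset_closure
    have hUnion : μ (⋃ pq ∈ T, Metric.ball ((pq.1 : ℝ) / (pq.2 : ℝ)) (2 * ψm / (pq.2 : ℝ))) =
        ∑ pq ∈ T, μ (Metric.ball ((pq.1 : ℝ) / (pq.2 : ℝ)) (2 * ψm / (pq.2 : ℝ))) :=
      measure_biUnion_finset hdisj' fun pq _ => measurableSet_ball
    have hsubA : (⋃ pq ∈ T, Metric.ball ((pq.1 : ℝ) / (pq.2 : ℝ)) (2 * ψm / (pq.2 : ℝ))) ⊆
        Aset (fun q => 2 * ψ q) m := by
      intro y hy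
      simp only [mem_iUnion, exists_prop] at hy
      obtain ⟨pq, hpqT, hy⟩ := hy
      obtain ⟨hg, hq1, hq2, -⟩ := hT hpqT
      have hq0 : 0 < pq.2 := lt_of_lt_of_le (pow_pos two_pos m) hq1
      have hqR : (0 : ℝ) < pq.2 := by exact_mod_cast hq0
      refine ⟨pq.1, pq.2, hg, hq1, hq2, ?_⟩
      rw [Metric.mem_ball, Real.dist_eq] at hy
      have heq : (pq.2 : ℝ) * y - pq.1 = pq.2 * (y - pq.1 / pq.2) := by field_simp
      rw [heq, abs_mul, abs_of_pos hqR]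
      calc (pq.2 : ℝ) * |y - pq.1 / pq.2| < pq.2 * (2 * ψm / pq.2) :=
            mul_lt_mul_of_pos_left hy hqR
        _ = 2 * ψm := by field_simp
    have chain : (T.card : ENNReal) * ENNReal.ofReal l ≤ ENNReal.ofReal R0 := by
      calc (T.card : ENNReal) * ENNReal.ofReal l = ∑ _pq ∈ T, ENNReal.ofReal l := by
            rw [Finset.sum_const, nsmul_eq_mul]
        _ ≤ ∑ pq ∈ T, μ (Metric.ball ((pq.1 : ℝ) / (pq.2 : ℝ)) (2 * ψm / (pq.2 : ℝ))) :=
            Finset.sum_le_sum fun pq hpq => hlow pq (hT hpq)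
        _ = μ (⋃ pq ∈ T, Metric.ball ((pq.1 : ℝ) / (pq.2 : ℝ)) (2 * ψm / (pq.2 : ℝ))) :=
            hUnion.symm
        _ ≤ μ (Aset (fun q => 2 * ψ q) m) := measure_mono hsubA
        _ ≤ ENNReal.ofReal R0 := hmeas m hm
    have := ENNReal.toReal_mono ENNReal.ofReal_ne_top chain
    simpa [ENNReal.toReal_mul, ENNReal.toReal_ofReal hl.le, ENNReal.toReal_ofReal hR0.le]
      using this
  -- finiteness
  have hfin : S.Finite := by
    by_contra hinf
    have hinf' : S.Infinite := hinf
    obtain ⟨T, hTS, hTcard⟩ := hinf'.exists_subset_card_eq (⌈R0 / l⌉₊ + 1)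
    have h1 := key T hTS
    have h2 : (T.card : ℝ) ≤ R0 / l := (le_div_iff₀ hl).2 h1
    rw [hTcard] at h2
    push_cast at h2
    linarith [Nat.le_ceil (R0 / l)]
  refine ⟨hfin, ?_⟩
  -- the cardinality bound
  have hkey : (S.ncard : ℝ) * l ≤ R0 := by
    rw [Set.ncard_eq_toFinset_card S hfin]
    exact key hfin.toFinset (by simp)
  -- algebra: R0 = target * l
  set tgt : ℝ := 3 * Chat * a₁⁻¹ * (2 : ℝ) ^ ((m : ℝ) * (1 + s) + s) * ψm ^ (1 - s) with htgt
  have halg : R0 = tgt * l := by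
    have e1 : (ψm / (2 : ℝ) ^ (m + 1)) ^ s = ψm ^ s / ((2 : ℝ) ^ (m + 1)) ^ s :=
      Real.div_rpow hψm.le (by positivity : (0:ℝ) ≤ (2:ℝ) ^ (m+1)) s
    have e2 : ((2 : ℝ) ^ (m + 1)) ^ s = (2 : ℝ) ^ (((m : ℝ) + 1) * s) := by
      rw [← Real.rpow_natCast 2 (m + 1), ← Real.rpow_mul (by norm_num)]
      push_cast
      ring_nf
    have e3 : ψm ^ (1 - s) * ψm ^ s = ψm := by
      rw [← Real.rpow_add hψm]
      simp
    have e4 : (2 : ℝ) ^ ((m : ℝ) * (1 + s) + s) =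
        (2 : ℝ) ^ (m : ℝ) * (2 : ℝ) ^ (((m : ℝ) + 1) * s) := by
      rw [← Real.rpow_add two_pos]
      ring_nf
    have e5 : (2 : ℝ) ^ (m : ℝ) = (2 : ℝ) ^ m := Real.rpow_natCast 2 m
    have hC : (0 : ℝ) < (2 : ℝ) ^ (((m : ℝ) + 1) * s) := Real.rpow_pos_of_pos two_pos _
    have expand : tgt * l = 3 * Chat * ((2 : ℝ) ^ m * (ψm ^ (1 - s) * ψm ^ s)) := by
      rw [htgt, hldef, e1, e2, e4, e5]
      field_simp
    rw [e3] at expand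
    rw [hR0def, expand]
  rw [halg] at hkey
  exact le_of_mul_le_mul_right hkey hl
end
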